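/- arXiv:1204.2087 — 10 statements merged into one kernel-verified Lean document; each statement's English description precedes it below -/
import Mathlib

section
/- If χ = (χ_st, χ_tr) : M_1 → M_2 is an in-splitting of multi-agent systems, then the induced map ĥ on tree nodes, defined by ĥ(ε) = ε and ĥ(x·i) = ĥ(x)·χ_st(i), is a tree isomorphism between the unfoldings t_{M_1} and t_{M_2}, and satisfies t_{M_2}(ĥ(x)) = χ_st(t_{M_1}(x)) for all nodes x. -/
/-!
Runs from `q` in `M₁` and runs from `χ q` in `M₂` correspond letter by letter: since `χ` is
a bijection from the successors of each state onto the successors of its image, a run of `M₂`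
lifts uniquely, one transition at a time, to a run of `M₁`. Hence `List.map χ` is a bijection
between the supports of the unfoldings, and since lifting is unique it also reflects the
child relation. The labelling identity is just `getLast` commuting with `map`.
-/

namespace List

variable {α β : Type*} {r : α → α → Prop} {s : β → β → Prop} {f : α → β}

theorem map_injOn_isChain_cons (hf : ∀ a, Set.InjOn f {b | r a b}) (a : α) :
    Set.InjOn (map f) {l | IsChain r (a :: l)} := by
  intro l hl m hm hlm
  induction l generalizing a m with
  | nil => exact (map_eq_nil_iff.mp hlm.symm).symm
  | cons b l ih =>
    obtain _ | ⟨c, m⟩ := m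
    · cases hlm
    obtain ⟨hab, hl⟩ := isChain_cons_cons.mp hl
    obtain ⟨hac, hm⟩ := isChain_cons_cons.mp hm
    rw [map_cons, map_cons, cons.injEq] at hlm
    obtain ⟨hbc, hlm⟩ := hlm
    obtain rfl : b = c := hf a hab hac hbc
    rw [ih b hl hm hlm]

theorem exists_isChain_cons_map_eq (hf : ∀ a, Set.SurjOn f {b | r a b} {b | s (f a) b})
    {a : α} {m : List β} (hm : IsChain s (f a :: m)) :
    ∃ l, IsChain r (a :: l) ∧ map f l = m := by
  induction m generalizing a with
  | nil => exact ⟨[], .singleton a, rfl⟩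
  | cons c m ih =>
    obtain ⟨hac, hm⟩ := isChain_cons_cons.mp hm
    obtain ⟨b, hab, rfl⟩ := hf a hac
    obtain ⟨l, hl, rfl⟩ := ih hm
    exact ⟨b :: l, .cons_cons hab hl, rfl⟩

theorem bijOn_map_isChain_cons (hf : ∀ a, Set.BijOn f {b | r a b} {b | s (f a) b}) (a : α) :
    Set.BijOn (map f) {l | IsChain r (a :: l)} {m | IsChain s (f a :: m)} :=
  ⟨fun _ hl => isChain_map_of_isChain f (fun _ _ h => (hf _).mapsTo h) hl,
    map_injOn_isChain_cons (fun a => (hf a).injOn) a,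
    fun _ hm => exists_isChain_cons_map_eq (fun a => (hf a).surjOn) hm⟩

theorem exists_eq_append_singleton_iff_map (hf : ∀ a, Set.InjOn f {b | r a b}) {a : α}
    {l m : List α} (hl : IsChain r (a :: l)) (hm : IsChain r (a :: m)) :
    (∃ b, m = l ++ [b]) ↔ ∃ c, map f m = map f l ++ [c] := by
  refine ⟨fun ⟨b, hb⟩ => ⟨f b, by simp [hb]⟩, fun ⟨c, hc⟩ => ?_⟩
  obtain ⟨k, t, rfl, hk, ht⟩ := map_eq_append_iff.mp hc
  obtain ⟨b, rfl, -⟩ := map_eq_singleton_iff.mp ht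
  have hk' : IsChain r (a :: k) := by
    rw [← cons_append] at hm
    exact hm.left_of_append
  exact ⟨b, by rw [map_injOn_isChain_cons hf a hk' hl hk]⟩

end List

set_option linter.deprecated false in
theorem stmt9_general {Q1 Q2 : Type*} (δ1 : Q1 → Q1 → Prop) (δ2 : Q2 → Q2 → Prop)
    (q01 : Q1) (q02 : Q2)
    (χ : Q1 → Q2)
    (hsucc : ∀ q, Set.BijOn χ {r | δ1 q r} {r | δ2 (χ q) r})
    (hinit : χ q01 = q02) :
    Set.BijOn (List.map χ) {x | List.Chain δ1 q01 x} {x | List.Chain δ2 q02 x} ∧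
    (∀ x y : List Q1, List.Chain δ1 q01 x → List.Chain δ1 q01 y →
      ((∃ i, y = x ++ [i]) ↔ (∃ j, List.map χ y = List.map χ x ++ [j]))) ∧
    (∀ x : List Q1, List.Chain δ1 q01 x →
      (q02 :: List.map χ x).getLast (List.cons_ne_nil _ _) =
        χ ((q01 :: x).getLast (List.cons_ne_nil _ _))) := by
  subst hinit
  exact ⟨List.bijOn_map_isChain_cons hsucc q01,
    fun _ _ => List.exists_eq_append_singleton_iff_map fun q => (hsucc q).injOn,
    fun x _ => List.getLast_map (l := q01 :: x) (List.cons_ne_nil _ _)⟩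

/-- An in-splitting `χ : M₁ → M₂` of multi-agent systems induces, via
`x ↦ List.map χ x`, a tree isomorphism between the unfoldings (a bijection between node sets
preserving the child relation) satisfying `t_{M₂}(ĥ(x)) = χ(t_{M₁}(x))` for all nodes. -/
theorem stmt9 {Q1 Q2 P : Type*} (δ1 : Q1 → Q1 → Prop) (δ2 : Q2 → Q2 → Prop)
    (q01 : Q1) (q02 : Q2) (π1 : Q1 → Set P) (π2 : Q2 → Set P)
    (χ : Q1 → Q2) (hsurj : Function.Surjective χ)
    (htrans : ∀ q r, δ1 q r → δ2 (χ q) (χ r))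
    (hlab : ∀ q, π2 (χ q) = π1 q)
    (hsucc : ∀ q, Set.BijOn χ {r | δ1 q r} {r | δ2 (χ q) r})
    (hinit : χ q01 = q02) :
    Set.BijOn (List.map χ) {x | List.Chain δ1 q01 x} {x | List.Chain δ2 q02 x} ∧
    (∀ x y : List Q1, List.Chain δ1 q01 x → List.Chain δ1 q01 y →
      ((∃ i, y = x ++ [i]) ↔ (∃ j, List.map χ y = List.map χ x ++ [j]))) ∧
    (∀ x : List Q1, List.Chain δ1 q01 x →
      (q02 :: List.map χ x).getLast (List.cons_ne_nil _ _) =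
        χ ((q01 :: x).getLast (List.cons_ne_nil _ _))) :=
  stmt9_general δ1 δ2 q01 q02 χ hsucc hinit
end

section
/- If χ : M_1 → M_2 is an in-splitting, then for every S ⊆ Q_2, the finitary universal-next operators satisfy AX^f_{M_1}(χ_st^{-1}(S)) = χ_st^{-1}(AX^f_{M_2}(S)), where AX^f_{M_i}(S) = { q : every δ_i-successor of q lies in S }. -/
/-- If `χ : M₁ → M₂` is an in-splitting (surjective on states, transition- and
label-preserving, mapping successor sets bijectively, preserving the initial state), then the
finitary universal-next operators commute with preimage:
`AX^f_{M₁}(χ⁻¹(S)) = χ⁻¹(AX^f_{M₂}(S))` for every `S ⊆ Q₂`. -/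
theorem stmt10 {Q1 Q2 P : Type*} (δ1 : Q1 → Q1 → Prop) (δ2 : Q2 → Q2 → Prop)
    (q01 : Q1) (q02 : Q2) (π1 : Q1 → Set P) (π2 : Q2 → Set P)
    (χ : Q1 → Q2) (hsurj : Function.Surjective χ)
    (htrans : ∀ q r, δ1 q r → δ2 (χ q) (χ r))
    (hlab : ∀ q, π2 (χ q) = π1 q)
    (hsucc : ∀ q, Set.BijOn χ {r | δ1 q r} {r | δ2 (χ q) r})
    (hinit : χ q01 = q02) :
    ∀ S : Set Q2,
      {q : Q1 | ∀ r, δ1 q r → r ∈ χ ⁻¹' S} = χ ⁻¹' {q : Q2 | ∀ r, δ2 q r → r ∈ S} := by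
  intro S
  ext q
  constructor
  · intro h r hr
    obtain ⟨r', hr', hrr'⟩ := (hsucc q).surjOn hr
    exact hrr' ▸ h r' hr'
  · intro h r hr
    exact h (χ r) (htrans q r hr)
end

section
/- For any multi-agent system M and agent a, the a-distinction Δ_a(M) is an in-splitting of M via the projection χ_st(s,S) = s. -/
/-- A multi-agent system: transition relation, initial state, atomic-proposition labelling. -/
structure MAS (Q P : Type*) where
  delta : Q → Q → Prop
  init : Q
  lab : Q → Set P

/-- `χ` witnesses an in-splitting `M₁ → M₂`. -/
def IsInSplitting {Q1 Q2 P : Type*} (M1 : MAS Q1 P) (M2 : MAS Q2 P) (χ : Q1 → Q2) : Prop :=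
  Function.Surjective χ ∧
  (∀ q r, M1.delta q r → M2.delta (χ q) (χ r)) ∧
  (∀ q, M2.lab (χ q) = M1.lab q) ∧
  (∀ q, Set.BijOn χ {r | M1.delta q r} {r | M2.delta (χ q) r}) ∧
  χ M1.init = M2.init

/-- The (pre-)a-distinction of a MAS `M` w.r.t. the observable atoms `Pa`: states are pairs
`(s, S)`, with subset-tracking transitions, initial state `(q₀, {q₀})`, label `π(s)`. -/
def DeltaDist {Q P : Type*} (M : MAS Q P) (Pa : Set P) : MAS (Q × Set Q) P where
  delta p p' := M.delta p.1 p'.1 ∧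
    p'.2 = {r' | M.lab r' ∩ Pa = M.lab p'.1 ∩ Pa ∧ ∃ s' ∈ p.2, M.delta s' r'}
  init := (M.init, {M.init})
  lab p := M.lab p.1

/-- Restriction of a MAS to its states reachable from the initial state. -/
def MAS.restrictReach {Q P : Type*} (M : MAS Q P) :
    MAS {q : Q // Relation.ReflTransGen M.delta M.init q} P where
  delta x y := M.delta x.val y.val
  init := ⟨M.init, Relation.ReflTransGen.refl⟩
  lab x := M.lab x.val

private lemma deltaDist_lift {Q P : Type*} (M : MAS Q P) (Pa : Set P) (q : Q)
    (h : Relation.ReflTransGen M.delta M.init q) :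
    ∃ S, Relation.ReflTransGen (DeltaDist M Pa).delta (DeltaDist M Pa).init (q, S) := by
  induction h with
  | refl => exact ⟨{M.init}, Relation.ReflTransGen.refl⟩
  | @tail b c h hd ih =>
    obtain ⟨S, hS⟩ := ih
    exact ⟨{r' | M.lab r' ∩ Pa = M.lab c ∩ Pa ∧ ∃ s' ∈ S, M.delta s' r'}, hS.tail ⟨hd, rfl⟩⟩

/-- For any MAS `M` (all of whose states are reachable) and agent `a`, the
a-distinction `Δₐ(M)` (the reachable part of the subset construction) is an in-splitting of
`M` via the first projection `(s,S) ↦ s`. -/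
theorem stmt12 {Q P : Type*} (M : MAS Q P) (Pa : Set P)
    (hreach : ∀ q : Q, Relation.ReflTransGen M.delta M.init q) :
    IsInSplitting ((DeltaDist M Pa).restrictReach) M (fun x => x.val.1) := by
  refine ⟨?_, ?_, fun q => rfl, ?_, rfl⟩
  · intro q
    obtain ⟨S, hS⟩ := deltaDist_lift M Pa q (hreach q)
    exact ⟨⟨(q, S), hS⟩, rfl⟩
  · intro q r h
    exact h.1
  · rintro ⟨⟨s, S⟩, hs⟩
    refine ⟨fun x hx => hx.1, ?_, ?_⟩
    · rintro ⟨⟨x, X⟩, hX⟩ hx ⟨⟨y, Y⟩, hY⟩ hy hxy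
      simp only at hxy
      subst hxy
      simp only [Subtype.mk.injEq, Prod.mk.injEq, true_and]
      exact hx.2.trans hy.2.symm
    · intro r hr
      exact ⟨⟨(r, {r' | M.lab r' ∩ Pa = M.lab r ∩ Pa ∧ ∃ s' ∈ S, M.delta s' r'}),
        hs.tail ⟨hr, rfl⟩⟩, ⟨hr, rfl⟩, rfl⟩
end

section
/- Subset-tracking invariant of the a-distinction: for every finite run ρ̄ of Δ_a(M) ending in a state (s, S), the second component S equals exactly the set of states r ∈ Q such that there is a run ρ' of M ending in r that is a-indistinguishable from the first-component projection ρ̄|_1 of ρ̄. -/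
/-!
The subset construction keeps, in its second component, the states reachable from the initial
state along runs with the same observations as the first component. Both sides obey the same
recursion: appending a state `p` with observation `x` to a run replaces the current set `S` by
the δ-successors of `S` whose observation is `x`. So the invariant follows by induction on the
run from its end.
-/

/-- Subset-tracking transition relation of the a-distinction `Δₐ(M)` of a MAS with transition
relation `δ`, labelling `lab` and observable atoms `Pa`. -/
def deltaDist {Q P : Type*} (δ : Q → Q → Prop) (lab : Q → Set P) (Pa : Set P) :
    (Q × Set Q) → (Q × Set Q) → Prop := fun p p' =>
  δ p.1 p'.1 ∧ p'.2 = {r' | lab r' ∩ Pa = lab p'.1 ∩ Pa ∧ ∃ s' ∈ p.2, δ s' r'}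

theorem List.isChain_cons_append_singleton_iff {α : Type*} {R : α → α → Prop} {a b : α}
    {l : List α} :
    IsChain R (a :: l ++ [b]) ↔ IsChain R (a :: l) ∧ R ((a :: l).getLast (cons_ne_nil _ _)) b := by
  rw [isChain_append, getLast?_eq_some_getLast (cons_ne_nil _ _)]
  simp

section ReachWithObs

variable {Q β : Type*} (δ : Q → Q → Prop) (o : Q → β)

def reachWithObs (S : Set Q) (w : List β) : Set Q :=
  {r | ∃ a ∈ S, ∃ l, List.IsChain δ (a :: l) ∧ l.map o = w ∧
    (a :: l).getLast (List.cons_ne_nil _ _) = r}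

@[simp]
theorem reachWithObs_nil (S : Set Q) : reachWithObs δ o S [] = S := by
  ext r
  simp [reachWithObs]

theorem reachWithObs_append_singleton (S : Set Q) (w : List β) (x : β) :
    reachWithObs δ o S (w ++ [x]) = {r | o r = x ∧ ∃ s ∈ reachWithObs δ o S w, δ s r} := by
  ext r
  constructor
  · rintro ⟨a, ha, l, hl, hmap, rfl⟩
    obtain ⟨l', _, rfl, hw, hx⟩ := List.map_eq_append_iff.1 hmap
    obtain ⟨y, rfl, rfl⟩ := List.map_eq_singleton_iff.1 hx
    obtain ⟨hl', hδ⟩ := List.isChain_cons_append_singleton_iff.1 hl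
    simp only [← List.cons_append, List.getLast_append_singleton]
    exact ⟨rfl, _, ⟨a, ha, l', hl', hw, rfl⟩, hδ⟩
  · rintro ⟨rfl, s, ⟨a, ha, l, hl, rfl, rfl⟩, hδ⟩
    refine ⟨a, ha, l ++ [r], List.isChain_cons_append_singleton_iff.2 ⟨hl, hδ⟩, by simp, ?_⟩
    simp only [← List.cons_append, List.getLast_append_singleton]

end ReachWithObs

theorem deltaDist_isChain_getLast_snd {Q P : Type*} (δ : Q → Q → Prop) (lab : Q → Set P)
    (Pa : Set P) {s₀ : Q} {S₀ : Set Q} {ρ : List (Q × Set Q)}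
    (hρ : List.IsChain (deltaDist δ lab Pa) ((s₀, S₀) :: ρ)) :
    (((s₀, S₀) :: ρ).getLast (List.cons_ne_nil _ _)).2 =
      reachWithObs δ (fun q => lab q ∩ Pa) S₀ (ρ.map fun p => lab p.1 ∩ Pa) := by
  induction ρ using List.reverseRecOn with
  | nil => simp
  | append_singleton l p ih =>
    obtain ⟨hl, -, hp⟩ := List.isChain_cons_append_singleton_iff.1 hρ
    rw [List.map_append, List.map_singleton, reachWithObs_append_singleton, ← ih hl, ← hp]
    simp only [← List.cons_append, List.getLast_append_singleton]

/-- Subset-tracking invariant: for every finite run `ρ̄` of `Δₐ(M)` (from the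
initial state `(q₀,{q₀})`) ending in `(s,S)`, the set `S` is exactly the set of states `r`
such that some run of `M` ending in `r` is a-indistinguishable from the first-component
projection of `ρ̄`. -/
theorem stmt13 {Q P : Type*} (δ : Q → Q → Prop) (q0 : Q) (lab : Q → Set P) (Pa : Set P)
    (ρ : List (Q × Set Q)) (hρ : List.Chain (deltaDist δ lab Pa) (q0, {q0}) ρ) :
    (((q0, ({q0} : Set Q)) :: ρ).getLast (List.cons_ne_nil _ _)).2 =
      {r : Q | ∃ ρ' : List Q, List.Chain δ q0 ρ' ∧
        ((q0, ({q0} : Set Q)) :: ρ).map (fun p => lab p.1 ∩ Pa) =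
          (q0 :: ρ').map (fun q => lab q ∩ Pa) ∧
        (q0 :: ρ').getLast (List.cons_ne_nil _ _) = r} := by
  rw [deltaDist_isChain_getLast_snd δ lab Pa hρ]
  ext r
  simp [reachWithObs, List.Chain, eq_comm]
end

section
/- If two runs ρ̄, ρ̄' of the a-distinction Δ_a(M) are a-indistinguishable and ρ̄ ends in (s,S), then ρ̄' ends in some state (r,S) with the same second component S. -/
lemma stmt14_aux {Q P : Type*} (δ : Q → Q → Prop) (lab : Q → Set P) (Pa : Set P) :
    ∀ (ρ ρ' : List (Q × Set Q)) (p p' : Q × Set Q), p.2 = p'.2 →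
      List.Chain (deltaDist δ lab Pa) p ρ →
      List.Chain (deltaDist δ lab Pa) p' ρ' →
      ρ.map (fun x => lab x.1 ∩ Pa) = ρ'.map (fun x => lab x.1 ∩ Pa) →
      ((p :: ρ).getLast (List.cons_ne_nil _ _)).2 =
        ((p' :: ρ').getLast (List.cons_ne_nil _ _)).2 := by
  intro ρ
  induction ρ with
  | nil =>
    intro ρ' p p' h2 _ _ hmap
    have : ρ' = [] := by simpa using (List.map_eq_nil_iff.mp hmap.symm)
    subst this
    simpa using h2
  | cons q ρt ih =>
    intro ρ' p p' h2 hc hc' hmap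
    cases ρ' with
    | nil => simp at hmap
    | cons q' ρt' =>
      simp only [List.map_cons, List.cons.injEq] at hmap
      obtain ⟨hlab, hmapt⟩ := hmap
      obtain ⟨⟨_, hq2⟩, hct⟩ := List.chain_cons.mp hc
      obtain ⟨⟨_, hq2'⟩, hct'⟩ := List.chain_cons.mp hc'
      have hq : q.2 = q'.2 := by rw [hq2, hq2', h2, hlab]
      have := ih ρt' q q' hq hct hct' hmapt
      simpa [List.getLast_cons] using this

/-- If two runs of `Δₐ(M)` are a-indistinguishable (equal `Πₐ`-restricted label
sequences, recalling that the label of `(s,S)` is `π(s)`) and one ends in `(s,S)`, then the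
other ends in some `(r,S)` with the same second component. -/
theorem stmt14 {Q P : Type*} (δ : Q → Q → Prop) (q0 : Q) (lab : Q → Set P) (Pa : Set P)
    (ρ ρ' : List (Q × Set Q))
    (hρ : List.Chain (deltaDist δ lab Pa) (q0, {q0}) ρ)
    (hρ' : List.Chain (deltaDist δ lab Pa) (q0, {q0}) ρ')
    (hsim : ((q0, ({q0} : Set Q)) :: ρ).map (fun p => lab p.1 ∩ Pa) =
            ((q0, ({q0} : Set Q)) :: ρ').map (fun p => lab p.1 ∩ Pa)) :
    (((q0, ({q0} : Set Q)) :: ρ).getLast (List.cons_ne_nil _ _)).2 =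
      (((q0, ({q0} : Set Q)) :: ρ').getLast (List.cons_ne_nil _ _)).2 := by
  have hmapt : ρ.map (fun p => lab p.1 ∩ Pa) = ρ'.map (fun p => lab p.1 ∩ Pa) := by
    simpa using hsim
  exact stmt14_aux δ lab Pa ρ ρ' _ _ rfl hρ hρ' hmapt
end

section
/- In the a-distinction Δ_a(M), two reachable states (q,S) and (r,R) satisfy (q,S) Γ_a (r,R) if and only if S = R, where Γ_a is the relation: (x,y) ∈ Γ_a iff every run ending in x has an a-indistinguishable run ending in y. -/
section RunEnds

variable {Q α : Type*} (δ : Q → Q → Prop) (obs : Q → α)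

def runEnds (S₀ : Set Q) (w : List α) : Set Q :=
  {r | ∃ s ∈ S₀, ∃ σ, List.IsChain δ (s :: σ) ∧ σ.map obs = w ∧
    (s :: σ).getLast (List.cons_ne_nil _ _) = r}

@[simp]
theorem runEnds_nil (S₀ : Set Q) : runEnds δ obs S₀ [] = S₀ := by
  ext r
  simp [runEnds]

theorem runEnds_cons (S₀ : Set Q) (o : α) (w : List α) :
    runEnds δ obs S₀ (o :: w) = runEnds δ obs {r | obs r = o ∧ ∃ s ∈ S₀, δ s r} w := by
  ext r
  simp only [runEnds, List.map_eq_cons_iff, Set.mem_ofPred_eq]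
  constructor
  · rintro ⟨s, hs, _, hchain, ⟨t, σ, rfl, hto, rfl⟩, rfl⟩
    rw [List.isChain_cons_cons] at hchain
    exact ⟨t, ⟨hto, s, hs, hchain.1⟩, σ, hchain.2, rfl, List.getLast_cons_cons.symm⟩
  · rintro ⟨t, ⟨hto, s, hs, hst⟩, σ, hchain, rfl, rfl⟩
    exact ⟨s, hs, t :: σ, hchain.cons_cons hst, ⟨t, σ, rfl, hto, rfl⟩, List.getLast_cons_cons⟩

end RunEnds

section Distinction

variable {Q P : Type*} {δ : Q → Q → Prop} {lab : Q → Set P} {Pa : Set P}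

theorem snd_getLast_eq_runEnds_of_isChain_deltaDist {p : Q × Set Q} {ρ : List (Q × Set Q)}
    (h : List.IsChain (deltaDist δ lab Pa) (p :: ρ)) :
    ((p :: ρ).getLast (List.cons_ne_nil _ _)).2 =
      runEnds δ (fun s => lab s ∩ Pa) p.2 (ρ.map fun x => lab x.1 ∩ Pa) := by
  induction ρ generalizing p with
  | nil => simp
  | cons p' ρ ih =>
    rw [List.isChain_cons_cons] at h
    obtain ⟨⟨-, hp'⟩, h⟩ := h
    rw [List.getLast_cons_cons, ih h, hp', List.map_cons, runEnds_cons]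

theorem snd_getLast_eq_of_isChain_deltaDist {p : Q × Set Q} {ρ ρ' : List (Q × Set Q)}
    (h : List.IsChain (deltaDist δ lab Pa) (p :: ρ))
    (h' : List.IsChain (deltaDist δ lab Pa) (p :: ρ'))
    (hobs : (ρ.map fun x => lab x.1 ∩ Pa) = ρ'.map fun x => lab x.1 ∩ Pa) :
    ((p :: ρ).getLast (List.cons_ne_nil _ _)).2 = ((p :: ρ').getLast (List.cons_ne_nil _ _)).2 := by
  rw [snd_getLast_eq_runEnds_of_isChain_deltaDist h, snd_getLast_eq_runEnds_of_isChain_deltaDist h',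
    hobs]

theorem fst_getLast_mem_snd_of_isChain_deltaDist {p : Q × Set Q} {ρ : List (Q × Set Q)}
    (h : List.IsChain (deltaDist δ lab Pa) (p :: ρ)) (hp : p.1 ∈ p.2) :
    ((p :: ρ).getLast (List.cons_ne_nil _ _)).1 ∈ ((p :: ρ).getLast (List.cons_ne_nil _ _)).2 := by
  induction ρ generalizing p with
  | nil => exact hp
  | cons p' ρ ih =>
    rw [List.isChain_cons_cons] at h
    obtain ⟨⟨hδ, hp'⟩, h⟩ := h
    rw [List.getLast_cons_cons]
    exact ih h (hp' ▸ ⟨rfl, p.1, hp, hδ⟩)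

theorem exists_isChain_deltaDist_map_fst {s : Q} {σ : List Q} (h : List.IsChain δ (s :: σ))
    (S : Set Q) :
    ∃ ρ, List.IsChain (deltaDist δ lab Pa) ((s, S) :: ρ) ∧ ρ.map Prod.fst = σ := by
  induction σ generalizing s S with
  | nil => exact ⟨[], List.IsChain.singleton _, rfl⟩
  | cons t σ ih =>
    rw [List.isChain_cons_cons] at h
    obtain ⟨ρ, hρ, rfl⟩ := ih h.2 {r | lab r ∩ Pa = lab t ∩ Pa ∧ ∃ s' ∈ S, δ s' r}
    exact ⟨_ :: ρ, hρ.cons_cons ⟨h.1, rfl⟩, rfl⟩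

end Distinction

/-- In `Δₐ(M)`, two reachable states `(q,S)` and `(r,R)` satisfy
`(q,S) Γₐ (r,R)` iff `S = R`, where `Γₐ` relates `x` to `y` iff every run ending in `x` has
an a-indistinguishable run ending in `y`. -/
theorem stmt15 {Q P : Type*} (δ : Q → Q → Prop) (q0 : Q) (lab : Q → Set P) (Pa : Set P) :
    let δΔ := deltaDist δ lab Pa
    let q0Δ : Q × Set Q := (q0, {q0})
    let obsRun : List (Q × Set Q) → List (Set P) :=
      fun ρ => (q0Δ :: ρ).map (fun p => lab p.1 ∩ Pa)
    let endsIn : List (Q × Set Q) → (Q × Set Q) → Prop :=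
      fun ρ x => (q0Δ :: ρ).getLast (List.cons_ne_nil _ _) = x
    let Gamma : (Q × Set Q) → (Q × Set Q) → Prop := fun x y =>
      ∀ ρ, List.Chain δΔ q0Δ ρ → endsIn ρ x →
        ∃ ρ', List.Chain δΔ q0Δ ρ' ∧ obsRun ρ = obsRun ρ' ∧ endsIn ρ' y
    ∀ (q r : Q) (S R : Set Q),
      (∃ ρ, List.Chain δΔ q0Δ ρ ∧ endsIn ρ (q, S)) →
      (∃ ρ, List.Chain δΔ q0Δ ρ ∧ endsIn ρ (r, R)) →
      (Gamma (q, S) (r, R) ↔ S = R) := by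
  intro δΔ q0Δ obsRun endsIn Gamma q r S R ⟨ρq, hρq, hendq⟩ ⟨ρr, hρr, hendr⟩
  simp only [endsIn] at hendq hendr
  simp only [Gamma, obsRun, endsIn, List.map_cons, List.cons.injEq, true_and]
  constructor
  · intro hΓ
    obtain ⟨ρ', hρ', hobs, hend'⟩ := hΓ ρq hρq hendq
    simpa [hendq, hend'] using snd_getLast_eq_of_isChain_deltaDist hρq hρ' hobs
  · rintro rfl ρ hρ hend
    have hrS : r ∈ S := by
      simpa [hendr] using fst_getLast_mem_snd_of_isChain_deltaDist hρr rfl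
    have hS : S = runEnds δ (fun s => lab s ∩ Pa) {q0} (ρ.map fun x => lab x.1 ∩ Pa) :=
      (congrArg Prod.snd hend).symm.trans (snd_getLast_eq_runEnds_of_isChain_deltaDist hρ)
    rw [hS] at hrS
    obtain ⟨s, hs, σ, hσ, hobs, hlast⟩ := hrS
    subst s
    obtain ⟨ρ', hρ', rfl⟩ := exists_isChain_deltaDist_map_fst (lab := lab) (Pa := Pa) hσ {q0}
    have hobs' : (ρ.map fun x => lab x.1 ∩ Pa) = ρ'.map fun x => lab x.1 ∩ Pa := by
      rw [← hobs, List.map_map]; rfl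
    refine ⟨ρ', hρ', hobs', Prod.ext ?_ ?_⟩
    · rw [← hlast]
      exact (List.getLast_map _).symm
    · rw [← snd_getLast_eq_of_isChain_deltaDist hρ hρ' hobs', hend]
end

section
/- For any multi-agent system M and agent a, the a-distinction Δ_a(M) is a-distinguished: the relation Γ_a on Δ_a(M) is an equivalence relation (in particular, symmetric), and it is a congruence, i.e., if q Γ_a r, (q,q') and (r,r') are transitions, and q' and r' have the same Π_a-observation, then q' Γ_a r'. -/
/-!
If a run of `Δₐ(M)` ends in `(s, S)`, then `s ∈ S`, the set `S` depends only on the sequence of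
`Πₐ`-observations along the run, and every `t ∈ S` ends a run with the same observations that
ends in `(t, S)`. Hence, for reachable `x`, `x Γₐ y` holds exactly when `y.1 ∈ x.2` and
`y.2 = x.2`; this is visibly an equivalence on reachable states, and a congruence because the
subset component of a successor is computed from the predecessor's subset and the successor's
observation alone.
-/

namespace deltaDist

open List

variable {Q P : Type*} {δ : Q → Q → Prop} {lab : Q → Set P} {Pa : Set P}

theorem fst_mem_snd_getLast {a : Q × Set Q} {ρ : List (Q × Set Q)}
    (hρ : IsChain (deltaDist δ lab Pa) (a :: ρ)) (ha : a.1 ∈ a.2) :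
    ((a :: ρ).getLast (cons_ne_nil _ _)).1 ∈ ((a :: ρ).getLast (cons_ne_nil _ _)).2 := by
  induction ρ generalizing a with
  | nil => exact ha
  | cons b ρ ih =>
    obtain ⟨⟨hδ, hb⟩, hρ⟩ := isChain_cons_cons.mp hρ
    exact ih hρ (hb ▸ ⟨rfl, a.1, ha, hδ⟩)

theorem snd_getLast_eq_of_map_eq {a b : Q × Set Q} {ρ σ : List (Q × Set Q)}
    (hρ : IsChain (deltaDist δ lab Pa) (a :: ρ)) (hσ : IsChain (deltaDist δ lab Pa) (b :: σ))
    (hab : a.2 = b.2) (hobs : ρ.map (fun p => lab p.1 ∩ Pa) = σ.map (fun p => lab p.1 ∩ Pa)) :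
    ((a :: ρ).getLast (cons_ne_nil _ _)).2 = ((b :: σ).getLast (cons_ne_nil _ _)).2 := by
  induction ρ generalizing a b σ with
  | nil => cases σ with
    | nil => exact hab
    | cons => simp at hobs
  | cons a' ρ ih => cases σ with
    | nil => simp at hobs
    | cons b' σ =>
      obtain ⟨⟨-, ha'⟩, hρ⟩ := isChain_cons_cons.mp hρ
      obtain ⟨⟨-, hb'⟩, hσ⟩ := isChain_cons_cons.mp hσ
      obtain ⟨hlab, hobs⟩ := cons_eq_cons.mp hobs
      have hlab : lab a'.1 ∩ Pa = lab b'.1 ∩ Pa := hlab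
      exact ih (a := a') (b := b') hρ hσ (by rw [ha', hb', hab, hlab]) hobs

theorem exists_isChain_getLast_eq_of_mem {a : Q × Set Q} {ρ : List (Q × Set Q)}
    (hρ : IsChain (deltaDist δ lab Pa) (a :: ρ)) {t : Q}
    (ht : t ∈ ((a :: ρ).getLast (cons_ne_nil _ _)).2) :
    ∃ u ∈ a.2, ∃ σ, IsChain (deltaDist δ lab Pa) ((u, a.2) :: σ) ∧
      σ.map (fun p => lab p.1 ∩ Pa) = ρ.map (fun p => lab p.1 ∩ Pa) ∧
      ((u, a.2) :: σ).getLast (cons_ne_nil _ _) = (t, ((a :: ρ).getLast (cons_ne_nil _ _)).2) := by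
  induction ρ generalizing a with
  | nil => exact ⟨t, ht, [], .singleton _, rfl, rfl⟩
  | cons b ρ ih =>
    obtain ⟨⟨-, hb⟩, hρ⟩ := isChain_cons_cons.mp hρ
    obtain ⟨u', hu', σ, hσ, hobs, hlast⟩ := ih hρ ht
    rw [hb] at hu'
    obtain ⟨hlab, u, hu, hδ⟩ := hu'
    refine ⟨u, hu, (u', b.2) :: σ, isChain_cons_cons.mpr ⟨⟨hδ, ?_⟩, hσ⟩, ?_, hlast⟩
    · rw [hb, hlab]
    · rw [map_cons, map_cons, hobs, hlab]

variable (δ lab Pa) in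
def Reachable (q0 : Q) (x : Q × Set Q) : Prop :=
  ∃ ρ, IsChain (deltaDist δ lab Pa) ((q0, {q0}) :: ρ) ∧
    ((q0, {q0}) :: ρ).getLast (cons_ne_nil _ _) = x

variable (δ lab Pa) in
def Gamma (q0 : Q) (x y : Q × Set Q) : Prop :=
  ∀ ρ, IsChain (deltaDist δ lab Pa) ((q0, {q0}) :: ρ) →
    ((q0, {q0}) :: ρ).getLast (cons_ne_nil _ _) = x →
    ∃ ρ', IsChain (deltaDist δ lab Pa) ((q0, {q0}) :: ρ') ∧
      ((q0, {q0}) :: ρ).map (fun p => lab p.1 ∩ Pa) =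
        ((q0, {q0}) :: ρ').map (fun p => lab p.1 ∩ Pa) ∧
      ((q0, {q0}) :: ρ').getLast (cons_ne_nil _ _) = y

theorem Reachable.fst_mem_snd {q0 : Q} {x : Q × Set Q} (hx : Reachable δ lab Pa q0 x) :
    x.1 ∈ x.2 := by
  obtain ⟨ρ, hρ, rfl⟩ := hx
  exact fst_mem_snd_getLast hρ rfl

theorem Reachable.mem_snd_and_snd_eq_of_gamma {q0 : Q} {x y : Q × Set Q}
    (hx : Reachable δ lab Pa q0 x) (hxy : Gamma δ lab Pa q0 x y) : y.1 ∈ x.2 ∧ y.2 = x.2 := by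
  obtain ⟨ρ, hρ, rfl⟩ := hx
  obtain ⟨ρ', hρ', hobs, rfl⟩ := hxy ρ hρ rfl
  have hsnd := snd_getLast_eq_of_map_eq hρ' hρ rfl (cons_eq_cons.mp hobs).2.symm
  exact ⟨hsnd ▸ fst_mem_snd_getLast hρ' rfl, hsnd⟩

theorem gamma_of_mem_snd_of_snd_eq {q0 : Q} {x y : Q × Set Q} (hmem : y.1 ∈ x.2)
    (hsnd : y.2 = x.2) : Gamma δ lab Pa q0 x y := by
  rintro ρ hρ rfl
  obtain ⟨u, hu, σ, hσ, hobs, hlast⟩ := exists_isChain_getLast_eq_of_mem hρ hmem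
  obtain rfl : u = q0 := hu
  exact ⟨σ, hσ, by rw [map_cons, map_cons, hobs], by rw [hlast, ← hsnd]⟩

end deltaDist

open deltaDist in
/-- `Δₐ(M)` is a-distinguished: on its reachable states, the relation `Γₐ`
(every run ending in the first state has an a-indistinguishable run ending in the second)
is reflexive, symmetric and transitive, and it is a congruence: if `x Γₐ y`, `(x,x')` and
`(y,y')` are transitions, and `x'`, `y'` have the same `Πₐ`-observation, then `x' Γₐ y'`. -/
theorem stmt16 {Q P : Type*} (δ : Q → Q → Prop) (q0 : Q) (lab : Q → Set P) (Pa : Set P) :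
    let δΔ := deltaDist δ lab Pa
    let q0Δ : Q × Set Q := (q0, {q0})
    let obsRun : List (Q × Set Q) → List (Set P) :=
      fun ρ => (q0Δ :: ρ).map (fun p => lab p.1 ∩ Pa)
    let endsIn : List (Q × Set Q) → (Q × Set Q) → Prop :=
      fun ρ x => (q0Δ :: ρ).getLast (List.cons_ne_nil _ _) = x
    let Reach : (Q × Set Q) → Prop := fun x => ∃ ρ, List.Chain δΔ q0Δ ρ ∧ endsIn ρ x
    let Gamma : (Q × Set Q) → (Q × Set Q) → Prop := fun x y =>
      ∀ ρ, List.Chain δΔ q0Δ ρ → endsIn ρ x →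
        ∃ ρ', List.Chain δΔ q0Δ ρ' ∧ obsRun ρ = obsRun ρ' ∧ endsIn ρ' y
    (∀ x, Reach x → Gamma x x) ∧
    (∀ x y, Reach x → Reach y → Gamma x y → Gamma y x) ∧
    (∀ x y z, Reach x → Reach y → Reach z → Gamma x y → Gamma y z → Gamma x z) ∧
    (∀ x y x' y', Reach x → Reach y → Gamma x y → δΔ x x' → δΔ y y' →
      lab x'.1 ∩ Pa = lab y'.1 ∩ Pa → Gamma x' y') := by
  intro δΔ q0Δ obsRun endsIn Reach Gamma
  refine ⟨fun x hx => gamma_of_mem_snd_of_snd_eq (Reachable.fst_mem_snd hx) rfl, ?_, ?_, ?_⟩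
  · intro x y hx _ hxy
    obtain ⟨-, hsnd⟩ := Reachable.mem_snd_and_snd_eq_of_gamma hx hxy
    exact gamma_of_mem_snd_of_snd_eq (hsnd ▸ Reachable.fst_mem_snd hx) hsnd.symm
  · intro x y z hx hy _ hxy hyz
    obtain ⟨-, hyx⟩ := Reachable.mem_snd_and_snd_eq_of_gamma hx hxy
    obtain ⟨hzy, hzy'⟩ := Reachable.mem_snd_and_snd_eq_of_gamma hy hyz
    exact gamma_of_mem_snd_of_snd_eq (hyx ▸ hzy) (hzy'.trans hyx)
  · rintro x y x' y' hx - hxy ⟨-, hx'⟩ ⟨hδy, hy'⟩ hobs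
    obtain ⟨hyx, hsnd⟩ := Reachable.mem_snd_and_snd_eq_of_gamma hx hxy
    refine gamma_of_mem_snd_of_snd_eq (hx' ▸ ⟨hobs.symm, y.1, hyx, hδy⟩) ?_
    rw [hy', hx', hsnd, hobs]
end

section
/- If Γ_a is a congruence relation on a multi-agent system M (in particular reflexive and closed under: q Γ_a r, (q,q') ∈ δ, (r,r') ∈ δ, and equal Π_a-observations of q', r' imply q' Γ_a r'), then for all states s, r: s Γ_a r if and only if there exist runs ρ ending in s and ρ' ending in r with ρ ∼_a ρ'. -/
/-! Reachability gives a run ending in `s`, which `Γ s r` transports to an indistinguishable run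
ending in `r`. Conversely, `Γ` relates `q0` to itself, and the congruence property propagates it
along two indistinguishable runs in lockstep up to their endpoints. -/

namespace List

theorem IsChain.rel_getLast_of_map_eq {Q O : Type*} {δ : Q → Q → Prop} {Γ : Q → Q → Prop}
    (obs : Q → O)
    (hcong : ∀ q r q' r', Γ q r → δ q q' → δ r r' → obs q' = obs r' → Γ q' r') :
    ∀ {a b : Q} {ρ ρ' : List Q}, IsChain δ (a :: ρ) → IsChain δ (b :: ρ') →
      ρ.map obs = ρ'.map obs →
      Γ a b → Γ ((a :: ρ).getLast (cons_ne_nil _ _)) ((b :: ρ').getLast (cons_ne_nil _ _))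
  | _, _, [], [], _, _, _, hab => hab
  | _, _, [], _ :: _, _, _, hobs, _ | _, _, _ :: _, [], _, _, hobs, _ => nomatch hobs
  | _, _, _ :: _, _ :: _, .cons_cons hax hρ, .cons_cons hby hρ', hobs, hab => by
    obtain ⟨hxy, hobs⟩ := cons.inj hobs
    simpa only [getLast_cons_cons] using
      hρ.rel_getLast_of_map_eq obs hcong hρ' hobs (hcong _ _ _ _ hab hax hby hxy)

end List

/-- If the relation `Γₐ` of a MAS `M` (every run ending in the first state has
an a-indistinguishable run ending in the second) is a congruence (reflexive and closed under:
`q Γₐ r`, `(q,q') ∈ δ`, `(r,r') ∈ δ`, and equal `Πₐ`-observations of `q'`, `r'` imply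
`q' Γₐ r'`), and all states are reachable, then `s Γₐ r` iff there exist runs `ρ` ending in
`s` and `ρ'` ending in `r` with `ρ ∼ₐ ρ'`. -/
theorem stmt17 {Q P : Type*} (δ : Q → Q → Prop) (q0 : Q) (lab : Q → Set P) (Pa : Set P) :
    let obsRun : List Q → List (Set P) := fun ρ => (q0 :: ρ).map (fun q => lab q ∩ Pa)
    let endsIn : List Q → Q → Prop :=
      fun ρ q => (q0 :: ρ).getLast (List.cons_ne_nil _ _) = q
    let Gamma : Q → Q → Prop := fun q r =>
      ∀ ρ, List.Chain δ q0 ρ → endsIn ρ q →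
        ∃ ρ', List.Chain δ q0 ρ' ∧ obsRun ρ = obsRun ρ' ∧ endsIn ρ' r
    (∀ q : Q, ∃ ρ, List.Chain δ q0 ρ ∧ endsIn ρ q) →
    (∀ q, Gamma q q) →
    (∀ q r q' r', Gamma q r → δ q q' → δ r r' → lab q' ∩ Pa = lab r' ∩ Pa → Gamma q' r') →
    ∀ s r : Q, Gamma s r ↔
      ∃ ρ ρ', List.Chain δ q0 ρ ∧ List.Chain δ q0 ρ' ∧ endsIn ρ s ∧ endsIn ρ' r ∧
        obsRun ρ = obsRun ρ' := by
  intro obsRun endsIn Gamma hreach hrefl hcong s r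
  constructor
  · intro hsr
    obtain ⟨ρ, hρ, hs⟩ := hreach s
    obtain ⟨ρ', hρ', hobs, hr⟩ := hsr ρ hρ hs
    exact ⟨ρ, ρ', hρ, hρ', hs, hr, hobs⟩
  · rintro ⟨ρ, ρ', hρ, hρ', rfl, rfl, hobs⟩
    exact hρ.rel_getLast_of_map_eq _ hcong hρ' (List.cons.inj hobs).2 (hrefl q0)
end

section
/- Counterexample to commutation of knowledge with unfolding: let M be the one-agent system with states {1,2,3}, initial state 1, transitions 1→2, 2→1, 1→3, 3→3, all states labeled with the single observable proposition p_1. Then with S = {1,3}, the preimage under the last-state map t_M of the finitary knowledge set K_a^f(S) = {1} is strictly contained in K_a(t_M^{-1}(S)); specifically K_a(t_M^{-1}(S)) additionally contains the tree nodes ending in state 3 at odd depth. -/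
/-- Transitions of the counterexample system: states `0,1,2` (for `1,2,3` of the paper),
transitions `1→2, 2→1, 1→3, 3→3`. -/
def d3 : Fin 3 → Fin 3 → Prop := fun q r =>
  (q = 0 ∧ r = 1) ∨ (q = 1 ∧ r = 0) ∨ (q = 0 ∧ r = 2) ∨ (q = 2 ∧ r = 2)

/-!
All states carry the same observable label, so two runs are indistinguishable exactly when
they have the same length. Everything therefore reduces to `d3Reach n q`: a run of `n`
transitions from `0` can end in `0` iff `n` is even, in `1` iff `n` is odd, and in `2` iff
`n ≥ 1`. Every run ending in `1` has an equally long twin ending in `2` but none ending in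
`0`, which forces `K_a^f {0, 2} = {0}`. On the unfolding, a run lies in `K_a(t⁻¹{0, 2})` iff
no run of its length ends in `1`, i.e. iff its length is even; this includes the runs
`0 2 … 2` with an odd number of states.
-/

namespace List

variable {α : Type*} {R : α → α → Prop}

theorem IsChain.getLast_invariant (P : ℕ → α → Prop)
    (hstep : ∀ n a b, P n a → R a b → P (n + 1) b) :
    ∀ {a : α} {l : List α} {k : ℕ}, IsChain R (a :: l) → P k a →
      P (k + l.length) ((a :: l).getLast (cons_ne_nil a l))
  | _, [], _, _, ha => ha
  | _, b :: l, k, hl, ha => by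
    rw [isChain_cons_cons] at hl
    have := hl.2.getLast_invariant P hstep (hstep k _ _ ha hl.1)
    rwa [getLast_cons (cons_ne_nil b l), length_cons, Nat.add_comm l.length, ← Nat.add_assoc]

theorem IsChain.concat_of_rel {a b : α} {l : List α} (hl : IsChain R (a :: l))
    (hb : R ((a :: l).getLast (cons_ne_nil a l)) b) : IsChain R (a :: (l ++ [b])) :=
  hl.append (isChain_singleton b) (by
    rw [getLast?_eq_some_getLast (cons_ne_nil a l)]
    simpa using hb)

end List

def d3Reach (n : ℕ) (q : Fin 3) : Prop :=
  q = 0 ∧ Even n ∨ q = 1 ∧ Odd n ∨ q = 2 ∧ n ≠ 0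

theorem d3Reach_succ {n : ℕ} {q r : Fin 3} (hq : d3Reach n q) (hqr : d3 q r) :
    d3Reach (n + 1) r := by
  unfold d3Reach at *
  rcases hqr with ⟨rfl, rfl⟩ | ⟨rfl, rfl⟩ | ⟨rfl, rfl⟩ | ⟨rfl, rfl⟩ <;>
    simp_all [parity_simps]

theorem exists_d3_of_d3Reach_succ {n : ℕ} {r : Fin 3} (hr : d3Reach (n + 1) r) :
    ∃ q, d3Reach n q ∧ d3 q r := by
  unfold d3Reach d3 at *
  rcases hr with ⟨rfl, hn⟩ | ⟨rfl, hn⟩ | ⟨rfl, -⟩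
  · exact ⟨1, by simp_all [parity_simps]⟩
  · exact ⟨0, by simp_all [parity_simps]⟩
  · rcases n.eq_zero_or_pos with rfl | hn
    · exact ⟨0, by simp⟩
    · exact ⟨2, by simp [hn.ne']⟩

theorem exists_run_iff_d3Reach {n : ℕ} {q : Fin 3} :
    (∃ x : {l : List (Fin 3) // List.IsChain d3 (0 :: l)},
      x.1.length = n ∧ (0 :: x.1).getLast (List.cons_ne_nil 0 x.1) = q) ↔ d3Reach n q := by
  constructor
  · rintro ⟨⟨l, hl⟩, rfl, rfl⟩
    simpa using
      hl.getLast_invariant d3Reach (fun _ _ _ => d3Reach_succ) (k := 0) (by simp [d3Reach])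
  · induction n generalizing q with
    | zero => rintro (⟨rfl, -⟩ | ⟨-, h⟩ | ⟨-, h⟩) <;> simp_all
    | succ n ih =>
      intro hq
      obtain ⟨p, hp, hpq⟩ := exists_d3_of_d3Reach_succ hq
      obtain ⟨⟨l, hl⟩, rfl, rfl⟩ := ih hp
      exact ⟨⟨l ++ [q], hl.concat_of_rel hpq⟩, by simp, by simp⟩

theorem d3Reach_one_iff {n : ℕ} : d3Reach n 1 ↔ Odd n := by
  simp [d3Reach]

theorem forall_d3Reach_one_imp_iff {q : Fin 3} :
    (∀ n, d3Reach n 1 → d3Reach n q) ↔ q ≠ 0 := by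
  refine ⟨fun h hq => ?_, fun hq n hn => ?_⟩
  · simpa [hq, d3Reach] using h 1 (by simp [d3Reach])
  · fin_cases q
    · exact absurd rfl hq
    · exact hn
    · exact .inr (.inr ⟨rfl, (d3Reach_one_iff.1 hn).pos.ne'⟩)

theorem even_iff_of_d3Reach {n : ℕ} {q : Fin 3} (h : d3Reach n q) :
    Even n ↔ q = 0 ∨ q = 2 ∧ Odd (n + 1) := by
  rcases h with ⟨rfl, hn⟩ | ⟨rfl, hn⟩ | ⟨rfl, -⟩ <;> simp_all [parity_simps]

section Fibers

variable {N ι Q : Type*} (len : N → ι) (last : N → Q) {R : ι → Q → Prop}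

theorem forall_len_eq_imp_iff (hR : ∀ n q, (∃ x, len x = n ∧ last x = q) ↔ R n q)
    (x : N) (T : Set Q) :
    (∀ y, len x = len y → last y ∈ T) ↔ ∀ q, R (len x) q → q ∈ T := by
  simp only [← hR]
  exact ⟨fun h q ⟨y, hy, hyq⟩ => hyq ▸ h y hy.symm,
    fun h y hy => h _ ⟨y, hy.symm, rfl⟩⟩

theorem forall_last_eq_imp_exists_iff (hR : ∀ n q, (∃ x, len x = n ∧ last x = q) ↔ R n q)
    (s q : Q) :
    (∀ x, last x = s → ∃ y, len x = len y ∧ last y = q) ↔ ∀ n, R n s → R n q := by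
  simp only [← hR]
  refine ⟨fun h n ⟨x, hx, hxs⟩ => ?_, fun h x hxs => ?_⟩
  · obtain ⟨y, hy, hyq⟩ := h x hxs
    exact ⟨y, hy ▸ hx, hyq⟩
  · obtain ⟨y, hy, hyq⟩ := h _ ⟨x, rfl, hxs⟩
    exact ⟨y, hy.symm, hyq⟩

end Fibers

/-- Counterexample to commutation of knowledge with unfolding. In the one-agent
system above with all states carrying the single observable proposition, for `S = {1,3}`
(here `{0,2}`): `t_M⁻¹(K_a^f(S))` is exactly the runs ending in state `1`, while
`K_a(t_M⁻¹(S))` additionally contains exactly the runs ending in state `3` of odd length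
(runs counted including the initial state), so the former is strictly contained in the
latter. -/
theorem stmt18 :
    let lab : Fin 3 → Set Unit := fun _ => Set.univ
    let Pa : Set Unit := Set.univ
    let Node := {x : List (Fin 3) // List.Chain d3 0 x}
    let lastSt : Node → Fin 3 := fun x => ((0 : Fin 3) :: x.val).getLast (List.cons_ne_nil _ _)
    let obsRun : List (Fin 3) → List (Set Unit) :=
      fun ρ => ((0 : Fin 3) :: ρ).map (fun q => lab q ∩ Pa)
    let sim : Node → Node → Prop := fun x y => obsRun x.val = obsRun y.val
    let Gamma : Fin 3 → Fin 3 → Prop := fun s q =>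
      ∀ x : Node, lastSt x = s → ∃ y : Node, sim x y ∧ lastSt y = q
    let Kf : Set (Fin 3) → Set (Fin 3) := fun S => {q | ∀ s, Gamma s q → s ∈ S}
    let Kt : Set Node → Set Node := fun T => {x | ∀ y : Node, sim x y → y ∈ T}
    let S : Set (Fin 3) := {0, 2}
    lastSt ⁻¹' (Kf S) = {x : Node | lastSt x = 0} ∧
    Kt (lastSt ⁻¹' S) =
      {x : Node | lastSt x = 0 ∨ (lastSt x = 2 ∧ Odd (x.val.length + 1))} ∧
    lastSt ⁻¹' (Kf S) ⊂ Kt (lastSt ⁻¹' S) := by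
  intro lab Pa Node lastSt obsRun sim Gamma Kf Kt S
  have hsim (x y : Node) : sim x y ↔ x.val.length = y.val.length := by
    simp [sim, obsRun, lab, Pa, List.map_const', List.replicate_inj]
  have hreach (n : ℕ) (q : Fin 3) :
      (∃ x : Node, x.val.length = n ∧ lastSt x = q) ↔ d3Reach n q :=
    exists_run_iff_d3Reach
  have hS (q : Fin 3) : q ∈ S ↔ q ≠ 1 := by fin_cases q <;> simp [S]
  have hKf : Kf S = {0} := by
    ext q
    change (∀ s, (∀ x, lastSt x = s → ∃ y, sim x y ∧ lastSt y = q) → s ∈ S) ↔ q = 0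
    simp only [hsim, forall_last_eq_imp_exists_iff _ _ hreach, hS]
    refine ⟨fun h => by_contra fun hq => h 1 (forall_d3Reach_one_imp_iff.2 hq) rfl, ?_⟩
    rintro rfl s hs rfl
    exact forall_d3Reach_one_imp_iff.1 hs rfl
  have hKt : Kt (lastSt ⁻¹' S) =
      {x : Node | lastSt x = 0 ∨ (lastSt x = 2 ∧ Odd (x.val.length + 1))} := by
    ext x
    change (∀ y, sim x y → lastSt y ∈ S) ↔
      lastSt x = 0 ∨ (lastSt x = 2 ∧ Odd (x.val.length + 1))
    rw [← even_iff_of_d3Reach ((hreach _ _).1 ⟨x, rfl, rfl⟩)]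
    simp only [hsim, forall_len_eq_imp_iff _ _ hreach]
    simp only [hS, ← Nat.not_odd_iff_even, ← d3Reach_one_iff]
    exact ⟨fun h h1 => h 1 h1 rfl, fun h q hq hq1 => h (hq1 ▸ hq)⟩
  refine ⟨by rw [hKf]; rfl, hKt, ?_⟩
  rw [hKf, hKt]
  obtain ⟨x, hx, hx2⟩ := (hreach 2 2).2 (.inr (.inr ⟨rfl, two_ne_zero⟩))
  refine (Set.ssubset_iff_of_subset fun x hx => .inl hx).2
    ⟨x, .inr ⟨hx2, by rw [hx]; decide⟩, ?_⟩
  simp [hx2]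
end

section
/- For a multi-agent system M with finite state space, the pair of operators P_a and P_a^f commutes with the unfolding map — i.e., t_M^{-1}(P_a^f(S)) = P_a(t_M^{-1}(S)) for all S ⊆ Q — if and only if M is a-distinguished (Γ_a is an equivalence relation and a congruence). -/
/-!
Commutation tested on singletons `S = {q}` says exactly that `Γₐ` is symmetric and that
indistinguishable runs end in `Γₐ`-related states; `Γₐ` is reflexive and transitive anyway.
With all states reachable, the latter property is equivalent to the congruence condition: one
direction extends a witness run of `Γₐ q r` by observation-equal steps `q → q'`, `r → r'`, the
other propagates `Γₐ q₀ q₀` step by step along two indistinguishable runs.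
-/

namespace Unfolding

variable {Q O : Type*}

/-- Runs from `q₀`, listed without their initial state `q₀`. -/
def Run (δ : Q → Q → Prop) (q0 : Q) : Type _ := {x : List Q // (q0 :: x).IsChain δ}

variable {δ : Q → Q → Prop} {q0 : Q}

def Run.last (x : Run δ q0) : Q := (q0 :: x.1).getLast (List.cons_ne_nil _ _)

def Run.snoc (x : Run δ q0) (q : Q) (h : δ x.last q) : Run δ q0 :=
  ⟨x.1 ++ [q], by
    rw [← List.cons_append]
    refine x.2.append (.singleton q) ?_
    simpa [Run.last, List.getLast?_eq_some_getLast (List.cons_ne_nil _ _)] using h⟩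

theorem Run.last_snoc (x : Run δ q0) (q : Q) (h : δ x.last q) : (x.snoc q h).last = q :=
  (q0 :: x.1).getLast_concat

variable (δ q0) (obs : Q → O)

def Indist (x y : Run δ q0) : Prop := (q0 :: x.1).map obs = (q0 :: y.1).map obs

/-- The relation `Γₐ`. -/
def Gamma (q r : Q) : Prop := ∀ x : Run δ q0, x.last = q → ∃ y, Indist δ q0 obs x y ∧ y.last = r

/-- The congruence condition in the definition of an a-distinguished system. -/
def IsCongruence (G : Q → Q → Prop) : Prop :=
  ∀ q r q' r', G q r → δ q q' → δ r r' → obs q' = obs r' → G q' r'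

/-- `t_M⁻¹(P_a^f(S)) = P_a(t_M⁻¹(S))` for all `S`. -/
def CommutesWithUnfolding : Prop :=
  ∀ S : Set Q, Run.last ⁻¹' {q | ∃ s ∈ S, Gamma δ q0 obs s q} =
    {x | ∃ y, Indist δ q0 obs x y ∧ y ∈ Run.last ⁻¹' S}

variable {δ q0 obs}

theorem Indist.snoc {x y : Run δ q0} (hxy : Indist δ q0 obs x y) {q r : Q} (hq : δ x.last q)
    (hr : δ y.last r) (hobs : obs q = obs r) : Indist δ q0 obs (x.snoc q hq) (y.snoc r hr) := by
  unfold Indist at hxy ⊢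
  simp only [Run.snoc, ← List.cons_append, List.map_append, hxy, List.map_singleton, hobs]

theorem gamma_refl (q : Q) : Gamma δ q0 obs q q := fun x hx => ⟨x, rfl, hx⟩

theorem gamma_trans {q r s : Q} (hqr : Gamma δ q0 obs q r) (hrs : Gamma δ q0 obs r s) :
    Gamma δ q0 obs q s := fun x hx =>
  let ⟨y, hxy, hy⟩ := hqr x hx
  let ⟨z, hyz, hz⟩ := hrs y hy
  ⟨z, hxy.trans hyz, hz⟩

theorem equivalence_gamma_iff : Equivalence (Gamma δ q0 obs) ↔ Std.Symm (Gamma δ q0 obs) :=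
  ⟨fun h => ⟨fun _ _ => h.symm⟩, fun h => ⟨gamma_refl, h.symm _ _, gamma_trans⟩⟩

theorem commutesWithUnfolding_iff :
    CommutesWithUnfolding δ q0 obs ↔ Std.Symm (Gamma δ q0 obs) ∧
      ∀ x y : Run δ q0, Indist δ q0 obs x y → Gamma δ q0 obs x.last y.last := by
  constructor
  · intro h
    have hsymm : Std.Symm (Gamma δ q0 obs) := ⟨fun q r hqr x hx => by
      have hx' : x ∈ Run.last ⁻¹' {p | ∃ s ∈ ({q} : Set Q), Gamma δ q0 obs s p} :=
        ⟨q, rfl, hx ▸ hqr⟩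
      rw [h] at hx'
      exact hx'⟩
    refine ⟨hsymm, fun x y hxy => ?_⟩
    have hx : x ∈ {x | ∃ y', Indist δ q0 obs x y' ∧ y' ∈ Run.last ⁻¹' {y.last}} := ⟨y, hxy, rfl⟩
    rw [← h] at hx
    obtain ⟨s, rfl, hs⟩ := hx
    exact hsymm.symm _ _ hs
  · rintro ⟨hsymm, hindist⟩ S
    ext x
    constructor
    · rintro ⟨s, hs, hsx⟩
      obtain ⟨y, hxy, rfl⟩ := hsymm.symm _ _ hsx x rfl
      exact ⟨y, hxy, hs⟩
    · rintro ⟨y, hxy, hy⟩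
      exact ⟨y.last, hy, hsymm.symm _ _ (hindist x y hxy)⟩

theorem _root_.List.IsChain.rel_getLast_of_isCongruence {G : Q → Q → Prop}
    (hG : IsCongruence δ obs G) :
    ∀ {l₁ l₂ : List Q} {a b : Q}, (a :: l₁).IsChain δ → (b :: l₂).IsChain δ →
      l₁.map obs = l₂.map obs → G a b →
      G ((a :: l₁).getLast (List.cons_ne_nil _ _)) ((b :: l₂).getLast (List.cons_ne_nil _ _))
  | [], [], _, _, _, _, _, hab => hab
  | q :: l₁, r :: l₂, a, b, h₁, h₂, hmap, hab => by
    rw [List.isChain_cons_cons] at h₁ h₂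
    rw [List.map_cons, List.map_cons, List.cons.injEq] at hmap
    rw [List.getLast_cons (List.cons_ne_nil _ _), List.getLast_cons (List.cons_ne_nil _ _)]
    exact List.IsChain.rel_getLast_of_isCongruence hG h₁.2 h₂.2 hmap.2
      (hG a b q r hab h₁.1 h₂.1 hmap.1)

theorem gamma_last_of_indist_iff_isCongruence (hreach : ∀ q : Q, ∃ x : Run δ q0, x.last = q) :
    (∀ x y : Run δ q0, Indist δ q0 obs x y → Gamma δ q0 obs x.last y.last) ↔
      IsCongruence δ obs (Gamma δ q0 obs) := by
  constructor
  · intro h q r q' r' hqr hq hr hobs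
    obtain ⟨x, rfl⟩ := hreach q
    obtain ⟨y, hxy, rfl⟩ := hqr x rfl
    simpa only [Run.last_snoc] using h _ _ (hxy.snoc hq hr hobs)
  · intro hG x y hxy
    exact x.2.rel_getLast_of_isCongruence hG y.2 (List.cons.inj hxy).2 (gamma_refl q0)

end Unfolding

open Unfolding in
theorem stmt19_general {Q P : Type*} (δ : Q → Q → Prop) (q0 : Q)
    (lab : Q → Set P) (Pa : Set P) :
    let obs : Q → Set P := fun q => lab q ∩ Pa
    let Node := {x : List Q // List.Chain δ q0 x}
    let lastSt : Node → Q := fun x => (q0 :: x.val).getLast (List.cons_ne_nil _ _)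
    let sim : Node → Node → Prop := fun x y =>
      (q0 :: x.val).map obs = (q0 :: y.val).map obs
    let Gamma : Q → Q → Prop := fun q r =>
      ∀ x : Node, lastSt x = q → ∃ y : Node, sim x y ∧ lastSt y = r
    let Pf : Set Q → Set Q := fun S => {q | ∃ s ∈ S, Gamma s q}
    let Pt : Set Node → Set Node := fun T => {x | ∃ y : Node, sim x y ∧ y ∈ T}
    (∀ q : Q, ∃ x : Node, lastSt x = q) →
    ((∀ S : Set Q, lastSt ⁻¹' (Pf S) = Pt (lastSt ⁻¹' S)) ↔
      (Equivalence Gamma ∧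
        ∀ q r q' r', Gamma q r → δ q q' → δ r r' → obs q' = obs r' → Gamma q' r')) := by
  intro obs _ _ _ _ _ _ hreach
  change CommutesWithUnfolding δ q0 obs ↔
    Equivalence (Gamma δ q0 obs) ∧ IsCongruence δ obs (Gamma δ q0 obs)
  rw [commutesWithUnfolding_iff, gamma_last_of_indist_iff_isCongruence hreach,
    equivalence_gamma_iff]

/-- For a MAS `M` with finite state space all of whose states are reachable, the
pair `Pₐ / Pₐ^f` commutes with the unfolding map — `t_M⁻¹(Pₐ^f(S)) = Pₐ(t_M⁻¹(S))` for all
`S ⊆ Q` — if and only if `M` is a-distinguished (`Γₐ` is an equivalence relation and a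
congruence). -/
theorem stmt19 {Q P : Type*} [Finite Q] (δ : Q → Q → Prop) (q0 : Q)
    (lab : Q → Set P) (Pa : Set P) :
    let obs : Q → Set P := fun q => lab q ∩ Pa
    let Node := {x : List Q // List.Chain δ q0 x}
    let lastSt : Node → Q := fun x => (q0 :: x.val).getLast (List.cons_ne_nil _ _)
    let sim : Node → Node → Prop := fun x y =>
      (q0 :: x.val).map obs = (q0 :: y.val).map obs
    let Gamma : Q → Q → Prop := fun q r =>
      ∀ x : Node, lastSt x = q → ∃ y : Node, sim x y ∧ lastSt y = r
    let Pf : Set Q → Set Q := fun S => {q | ∃ s ∈ S, Gamma s q}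
    let Pt : Set Node → Set Node := fun T => {x | ∃ y : Node, sim x y ∧ y ∈ T}
    (∀ q : Q, ∃ x : Node, lastSt x = q) →
    ((∀ S : Set Q, lastSt ⁻¹' (Pf S) = Pt (lastSt ⁻¹' S)) ↔
      (Equivalence Gamma ∧
        ∀ q r q' r', Gamma q r → δ q q' → δ r r' → obs q' = obs r' → Gamma q' r')) :=
  stmt19_general δ q0 lab Pa
end
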